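/- Let (Y_t, Z_t) be an adapted pair solving Y_t = Y_T + ∫_t^T [f(s) − λ] ds − ∫_t^T Z_s dW_s on a filtered probability space carrying Brownian motion W, with f(s) ≤ L(s) + ε(s) pointwise where ε(s) ≤ 0, L bounded, and suppose E|Y_T| ≤ C(1 + E‖X_T‖²) with sup_T E‖X_T‖² < ∞. Then λ ≤ limsup_{T→∞} (1/T) E[∫₀^T L(s) ds]. -/

import Mathlib

/-!
Taking expectations in the BSDE gives `λ T = E[Y_T] - E[Y_0] + E ∫₀ᵀ f`. The boundary terms are
bounded uniformly in `T` (by the moment bounds on `Y_T` and `X_T`), and `f ≤ L`, so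
`λ ≤ B / T + (1 / T) E ∫₀ᵀ L` for a constant `B`; letting `T → ∞` gives the claim. Boundedness
of `L` keeps `(1 / T) E ∫₀ᵀ L` bounded, so that its `limsup` is the genuine one.
-/

open Filter MeasureTheory Topology

theorem le_limsup_inv_mul_of_mul_le_add {S : ℝ → ℝ} {lam B M : ℝ}
    (hlow : ∀ᶠ T in atTop, lam * T ≤ B + S T) (hup : ∀ᶠ T in atTop, S T ≤ M * T) :
    lam ≤ limsup (fun T => (1 / T) * S T) atTop := by
  have htend : Tendsto (fun T : ℝ => lam - B * T⁻¹) atTop (𝓝 lam) := by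
    simpa using tendsto_const_nhds.sub (tendsto_inv_atTop_zero.const_mul B)
  have hlow' : (fun T : ℝ => lam - B * T⁻¹) ≤ᶠ[atTop] fun T => (1 / T) * S T := by
    filter_upwards [hlow, eventually_gt_atTop 0] with T h hT
    rw [← sub_nonneg]
    field_simp
    linarith
  have hbdd : IsBoundedUnder (· ≤ ·) atTop (fun T => (1 / T) * S T) := by
    refine ⟨M, eventually_map.2 ?_⟩
    filter_upwards [hup, eventually_gt_atTop 0] with T h hT
    rw [one_div_mul_eq_div, div_le_iff₀ hT]
    linarith
  calc lam = limsup (fun T : ℝ => lam - B * T⁻¹) atTop := htend.limsup_eq.symm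
    _ ≤ _ := limsup_le_limsup hlow' htend.isCoboundedUnder_le hbdd

section PathIntegrals

variable {Ω : Type*} [MeasurableSpace Ω]

theorem integral_intervalIntegral_mono {P : Measure Ω} {f g : ℝ → Ω → ℝ} {T : ℝ} (hT : 0 ≤ T)
    (hfi : ∀ ω, IntervalIntegrable (fun s => f s ω) volume 0 T)
    (hgi : ∀ ω, IntervalIntegrable (fun s => g s ω) volume 0 T)
    (hfI : Integrable (fun ω => ∫ s in (0:ℝ)..T, f s ω) P)
    (hgI : Integrable (fun ω => ∫ s in (0:ℝ)..T, g s ω) P)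
    (hfg : ∀ s ω, f s ω ≤ g s ω) :
    ∫ ω, (∫ s in (0:ℝ)..T, f s ω) ∂P ≤ ∫ ω, (∫ s in (0:ℝ)..T, g s ω) ∂P :=
  integral_mono hfI hgI fun ω =>
    intervalIntegral.integral_mono_on hT (hfi ω) (hgi ω) fun s _ => hfg s ω

theorem abs_integral_intervalIntegral_le {P : Measure Ω} [IsProbabilityMeasure P]
    {L : ℝ → Ω → ℝ} {M : ℝ} (hL : ∀ s ω, |L s ω| ≤ M) (T : ℝ) :
    |∫ ω, (∫ s in (0:ℝ)..T, L s ω) ∂P| ≤ M * |T| := by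
  have hpath : ∀ ω, ‖∫ s in (0:ℝ)..T, L s ω‖ ≤ M * |T| := fun ω => by
    simpa using intervalIntegral.norm_integral_le_of_norm_le_const (a := 0) (b := T)
      (f := fun s => L s ω) fun s _ => hL s ω
  simpa using norm_integral_le_of_norm_le_const (μ := P) (ae_of_all P hpath)

end PathIntegrals

theorem stmt_16_general (N : ℕ) (Ω : Type*) [MeasureSpace Ω]
    (P : Measure Ω) [IsProbabilityMeasure P]
    (Y : ℝ → Ω → ℝ) (X : ℝ → Ω → EuclideanSpace ℝ (Fin N))
    (f L e : ℝ → Ω → ℝ) (lam : ℝ)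
    (hfLe : ∀ s ω, f s ω ≤ L s ω + e s ω)
    (he : ∀ s ω, e s ω ≤ 0)
    (M : ℝ) (hLbdd : ∀ s ω, |L s ω| ≤ M)
    (C : ℝ) (hC : 0 ≤ C)
    (hY : ∀ T, ∫ ω, |Y T ω| ∂P ≤ C * (1 + ∫ ω, ‖X T ω‖ ^ 2 ∂P))
    (KX : ℝ) (hX : ∀ T, ∫ ω, ‖X T ω‖ ^ 2 ∂P ≤ KX)
    (hfi : ∀ ω T, IntervalIntegrable (fun s => f s ω) MeasureTheory.volume 0 T)
    (hLi : ∀ ω T, IntervalIntegrable (fun s => L s ω) MeasureTheory.volume 0 T)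
    (hfI : ∀ T, Integrable (fun ω => ∫ s in (0:ℝ)..T, f s ω) P)
    (hLI : ∀ T, Integrable (fun ω => ∫ s in (0:ℝ)..T, L s ω) P)
    (hbal : ∀ T, 0 ≤ T →
      lam * T = (∫ ω, Y T ω ∂P) - (∫ ω, Y 0 ω ∂P) +
        ∫ ω, (∫ s in (0:ℝ)..T, f s ω) ∂P) :
    lam ≤ limsup (fun T => (1 / T) * ∫ ω, (∫ s in (0:ℝ)..T, L s ω) ∂P) atTop := by
  have hYT : ∀ T, ∫ ω, Y T ω ∂P ≤ C * (1 + KX) := fun T =>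
    calc ∫ ω, Y T ω ∂P ≤ ∫ ω, |Y T ω| ∂P := (le_abs_self _).trans abs_integral_le_integral_abs
      _ ≤ C * (1 + ∫ ω, ‖X T ω‖ ^ 2 ∂P) := hY T
      _ ≤ C * (1 + KX) := by gcongr; exact hX T
  have hY0 : -∫ ω, |Y 0 ω| ∂P ≤ ∫ ω, Y 0 ω ∂P := neg_le_of_abs_le abs_integral_le_integral_abs
  have hfL : ∀ s ω, f s ω ≤ L s ω := fun s ω =>
    (hfLe s ω).trans (add_le_of_nonpos_right (he s ω))
  refine le_limsup_inv_mul_of_mul_le_add (B := C * (1 + KX) + ∫ ω, |Y 0 ω| ∂P) (M := M) ?_ ?_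
  · filter_upwards [eventually_ge_atTop 0] with T hT
    have := integral_intervalIntegral_mono hT (hfi · T) (hLi · T) (hfI T) (hLI T) hfL
    linarith [hbal T hT, hYT T]
  · filter_upwards [eventually_ge_atTop 0] with T hT
    simpa [abs_of_nonneg hT] using
      (le_abs_self _).trans (abs_integral_intervalIntegral_le (P := P) hLbdd T)

theorem stmt_16 (N : ℕ) (Ω : Type*) [MeasureSpace Ω]
    (P : Measure Ω) [IsProbabilityMeasure P]
    (Y : ℝ → Ω → ℝ) (X : ℝ → Ω → EuclideanSpace ℝ (Fin N))
    (f L e : ℝ → Ω → ℝ) (lam : ℝ)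
    (hfLe : ∀ s ω, f s ω ≤ L s ω + e s ω)
    (he : ∀ s ω, e s ω ≤ 0)
    (M : ℝ) (hLbdd : ∀ s ω, |L s ω| ≤ M)
    (C : ℝ) (hC : 0 ≤ C)
    (hY : ∀ T, ∫ ω, |Y T ω| ∂P ≤ C * (1 + ∫ ω, ‖X T ω‖ ^ 2 ∂P))
    (KX : ℝ) (hX : ∀ T, ∫ ω, ‖X T ω‖ ^ 2 ∂P ≤ KX)
    (hfi : ∀ ω T, IntervalIntegrable (fun s => f s ω) MeasureTheory.volume 0 T)
    (hLi : ∀ ω T, IntervalIntegrable (fun s => L s ω) MeasureTheory.volume 0 T)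
    (hfI : ∀ T, Integrable (fun ω => ∫ s in (0:ℝ)..T, f s ω) P)
    (hLI : ∀ T, Integrable (fun ω => ∫ s in (0:ℝ)..T, L s ω) P)
    (hYI : ∀ T, Integrable (Y T) P)
    (hbal : ∀ T, 0 ≤ T →
      lam * T = (∫ ω, Y T ω ∂P) - (∫ ω, Y 0 ω ∂P) +
        ∫ ω, (∫ s in (0:ℝ)..T, f s ω) ∂P) :
    lam ≤ limsup (fun T => (1 / T) * ∫ ω, (∫ s in (0:ℝ)..T, L s ω) ∂P) atTop :=
  stmt_16_general N Ω P Y X f L e lam hfLe he M hLbdd C hC hY KX hX hfi hLi hfI hLI hbal
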